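/- For every odd integer k ≥ 1, lim_{q → 1⁻} (1 - q)^{2k+1} · ∑_{n=1}^∞ χ_{-4}(n) ∑_{m=1}^∞ m^{2k} q^{2nm} = (2k)! · β(2k+1) / 2^{2k+1}, where q ranges over real numbers in (0,1). -/

import Mathlib

open Real Filter

lemma core_squeeze (j : ℕ) :
    Tendsto (fun x : ℝ => (1 - x) ^ (j + 1) * ∑' m : ℕ, (m : ℝ) ^ j * x ^ m)
      (nhdsWithin 1 (Set.Ioo 0 1)) (nhds (Nat.factorial j)) := by
  have hlow : Tendsto (fun x : ℝ => (Nat.factorial j : ℝ) * x ^ j)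
      (nhdsWithin 1 (Set.Ioo 0 1)) (nhds (Nat.factorial j)) := by
    have hc : Continuous fun x : ℝ => (Nat.factorial j : ℝ) * x ^ j :=
      continuous_const.mul (continuous_pow j)
    have h := hc.tendsto (1 : ℝ)
    simpa using h.mono_left nhdsWithin_le_nhds
  refine tendsto_of_tendsto_of_tendsto_of_le_of_le' hlow tendsto_const_nhds ?_ ?_ <;>
    filter_upwards [self_mem_nhdsWithin] with x hx
  · -- lower bound
    obtain ⟨hx0, hx1⟩ := hx
    have hxn : ‖x‖ < 1 := by rw [Real.norm_eq_abs, abs_of_pos hx0]; exact hx1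
    have hden : (0 : ℝ) < (1 - x) ^ (j + 1) := pow_pos (by linarith) _
    have h2 := hasSum_choose_mul_geometric_of_norm_lt_one (𝕜 := ℝ) j hxn
    have h3 : HasSum (fun n : ℕ => (Nat.factorial j : ℝ) * ((n + j).choose j : ℝ) * x ^ (n + j))
        ((Nat.factorial j : ℝ) * x ^ j * (1 / (1 - x) ^ (j + 1))) := by
      have := h2.mul_left ((Nat.factorial j : ℝ) * x ^ j)
      convert this using 2 with n
      · rfl
      rw [pow_add]
      ring
    have hsumf : Summable (fun m : ℕ => (m : ℝ) ^ j * x ^ m) :=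
      summable_pow_mul_geometric_of_norm_lt_one j hxn
    have hle : (Nat.factorial j : ℝ) * x ^ j * (1 / (1 - x) ^ (j + 1))
        ≤ ∑' m : ℕ, (m : ℝ) ^ j * x ^ m := by
      rw [← h3.tsum_eq]
      refine Summable.tsum_le_tsum_of_inj (· + j) (add_left_injective j)
        (fun c _ => by positivity) (fun n => ?_) h3.summable hsumf
      have hnat : (Nat.factorial j) * ((n + j).choose j) ≤ (n + j) ^ j := by
        rw [← Nat.descFactorial_eq_factorial_mul_choose]
        exact Nat.descFactorial_le_pow _ _
      have : ((Nat.factorial j : ℝ) * ((n + j).choose j : ℝ)) ≤ ((n + j : ℕ) : ℝ) ^ j := by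
        push_cast
        exact_mod_cast hnat
      have hxp : (0 : ℝ) ≤ x ^ (n + j) := by positivity
      calc (Nat.factorial j : ℝ) * ((n + j).choose j : ℝ) * x ^ (n + j)
          ≤ ((n + j : ℕ) : ℝ) ^ j * x ^ (n + j) := by
            exact mul_le_mul_of_nonneg_right this hxp
        _ = ((n + j : ℕ) : ℝ) ^ j * x ^ ((· + j) n) := rfl
    calc (Nat.factorial j : ℝ) * x ^ j
        = (1 - x) ^ (j + 1) * ((Nat.factorial j : ℝ) * x ^ j * (1 / (1 - x) ^ (j + 1))) := by
          field_simp
      _ ≤ (1 - x) ^ (j + 1) * ∑' m : ℕ, (m : ℝ) ^ j * x ^ m :=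
          mul_le_mul_of_nonneg_left hle hden.le
  · -- upper bound
    obtain ⟨hx0, hx1⟩ := hx
    have hxn : ‖x‖ < 1 := by rw [Real.norm_eq_abs, abs_of_pos hx0]; exact hx1
    have hden : (0 : ℝ) < (1 - x) ^ (j + 1) := pow_pos (by linarith) _
    have h2 := hasSum_choose_mul_geometric_of_norm_lt_one (𝕜 := ℝ) j hxn
    have h3 := h2.mul_left (Nat.factorial j : ℝ)
    have hsumf : Summable (fun m : ℕ => (m : ℝ) ^ j * x ^ m) :=
      summable_pow_mul_geometric_of_norm_lt_one j hxn
    have hle : (∑' m : ℕ, (m : ℝ) ^ j * x ^ m)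
        ≤ (Nat.factorial j : ℝ) * (1 / (1 - x) ^ (j + 1)) := by
      rw [← h3.tsum_eq]
      refine Summable.tsum_le_tsum (fun m => ?_) hsumf h3.summable
      have hnat : m ^ j ≤ (Nat.factorial j) * ((m + j).choose j) := by
        rw [← Nat.descFactorial_eq_factorial_mul_choose,
          Nat.add_descFactorial_eq_ascFactorial]
        calc m ^ j ≤ (m + 1) ^ j := Nat.pow_le_pow_left (Nat.le_succ m) j
          _ ≤ (m + 1).ascFactorial j := Nat.pow_succ_le_ascFactorial _ _
      have hxp : (0 : ℝ) ≤ x ^ m := by positivity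
      have : ((m : ℝ)) ^ j ≤ (Nat.factorial j : ℝ) * ((m + j).choose j : ℝ) := by
        exact_mod_cast hnat
      calc ((m : ℝ)) ^ j * x ^ m ≤ (Nat.factorial j : ℝ) * ((m + j).choose j : ℝ) * x ^ m :=
            mul_le_mul_of_nonneg_right this hxp
        _ = (Nat.factorial j : ℝ) * (((m + j).choose j : ℝ) * x ^ m) := by ring
    calc (1 - x) ^ (j + 1) * ∑' m : ℕ, (m : ℝ) ^ j * x ^ m
        ≤ (1 - x) ^ (j + 1) * ((Nat.factorial j : ℝ) * (1 / (1 - x) ^ (j + 1))) :=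
          mul_le_mul_of_nonneg_left hle hden.le
      _ = (Nat.factorial j : ℝ) := by field_simp

lemma geom_ratio (N : ℕ) (hN : 0 < N) :
    Tendsto (fun q : ℝ => (1 - q) / (1 - q ^ N)) (nhdsWithin 1 (Set.Ioo 0 1))
      (nhds (1 / (N : ℝ))) := by
  have hc : Continuous fun q : ℝ => ∑ i ∈ Finset.range N, q ^ i :=
    continuous_finset_sum _ (fun i _ => continuous_pow i)
  have hval : Tendsto (fun q : ℝ => ∑ i ∈ Finset.range N, q ^ i)
      (nhdsWithin 1 (Set.Ioo 0 1)) (nhds (N : ℝ)) := by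
    have := (hc.tendsto 1).mono_left (nhdsWithin_le_nhds (s := Set.Ioo (0:ℝ) 1))
    simpa using this
  have hdiv : Tendsto (fun q : ℝ => 1 / ∑ i ∈ Finset.range N, q ^ i)
      (nhdsWithin 1 (Set.Ioo 0 1)) (nhds (1 / (N : ℝ))) :=
    tendsto_const_nhds.div hval (by exact_mod_cast hN.ne')
  refine hdiv.congr' ?_
  filter_upwards [self_mem_nhdsWithin] with q hq
  obtain ⟨hq0, hq1⟩ := hq
  have h1q : (1 : ℝ) - q ≠ 0 := by linarith
  have key : 1 - q ^ N = (1 - q) * ∑ i ∈ Finset.range N, q ^ i := by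
    have := geom_sum_mul q N
    nlinarith [this]
  rw [key, div_mul_eq_div_mul_one_div, div_self h1q, one_mul]

lemma pointwise_lim (j N : ℕ) (hj : 1 ≤ j) (hN : 0 < N) :
    Tendsto (fun q : ℝ => (1 - q) ^ (j + 1) * ∑' m : ℕ, ((m : ℝ) + 1) ^ j * q ^ (N * (m + 1)))
      (nhdsWithin 1 (Set.Ioo 0 1))
      (nhds ((Nat.factorial j : ℝ) / (N : ℝ) ^ (j + 1))) := by
  have hpowmap : Tendsto (fun q : ℝ => q ^ N) (nhdsWithin 1 (Set.Ioo 0 1))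
      (nhdsWithin 1 (Set.Ioo 0 1)) := by
    rw [tendsto_nhdsWithin_iff]
    constructor
    · have := ((continuous_pow N).tendsto (1 : ℝ)).mono_left
        (nhdsWithin_le_nhds (s := Set.Ioo (0:ℝ) 1))
      simpa using this
    · filter_upwards [self_mem_nhdsWithin] with q hq
      exact ⟨pow_pos hq.1 N, pow_lt_one₀ hq.1.le hq.2 hN.ne'⟩
  have hA := (core_squeeze j).comp hpowmap
  have hB := (geom_ratio N hN).pow (j + 1)
  have hprod := hB.mul hA
  have hval : (1 / (N : ℝ)) ^ (j + 1) * (Nat.factorial j : ℝ)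
      = (Nat.factorial j : ℝ) / (N : ℝ) ^ (j + 1) := by
    rw [div_pow, one_pow]
    ring
  rw [hval] at hprod
  refine hprod.congr' ?_
  filter_upwards [self_mem_nhdsWithin] with q hq
  obtain ⟨hq0, hq1⟩ := hq
  have hx0 : (0 : ℝ) < q ^ N := pow_pos hq0 N
  have hx1 : q ^ N < 1 := pow_lt_one₀ hq0.le hq1 hN.ne'
  have hxne : (1 : ℝ) - q ^ N ≠ 0 := by linarith
  have hxnep : ((1 : ℝ) - q ^ N) ^ (j + 1) ≠ 0 := pow_ne_zero _ hxne
  have hxn : ‖q ^ N‖ < 1 := by rw [Real.norm_eq_abs, abs_of_pos hx0]; exact hx1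
  have hsum : Summable (fun m : ℕ => (m : ℝ) ^ j * (q ^ N) ^ m) :=
    summable_pow_mul_geometric_of_norm_lt_one j hxn
  have hS : ∑' m : ℕ, (m : ℝ) ^ j * (q ^ N) ^ m
      = ∑' m : ℕ, ((m : ℝ) + 1) ^ j * q ^ (N * (m + 1)) := by
    rw [Summable.tsum_eq_zero_add hsum]
    have h0 : ((0 : ℕ) : ℝ) ^ j * (q ^ N) ^ 0 = 0 := by
      rw [Nat.cast_zero, zero_pow (by omega)]
      ring
    rw [h0, zero_add]
    congr 1
    funext m
    rw [← pow_mul]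
    push_cast
    ring_nf
  show ((1 - q) / (1 - q ^ N)) ^ (j + 1)
      * ((1 - q ^ N) ^ (j + 1) * ∑' m : ℕ, (m : ℝ) ^ j * (q ^ N) ^ m)
      = (1 - q) ^ (j + 1) * ∑' m : ℕ, ((m : ℝ) + 1) ^ j * q ^ (N * (m + 1))
  rw [hS, div_pow]
  field_simp

lemma inner_tsum_bound (k n : ℕ) {q : ℝ} (hq0 : 0 < q) (hq1 : q < 1) :
    ∑' m : ℕ, ((m : ℝ) + 1) ^ (2 * k) * q ^ (2 * (n + 1) * (m + 1))
      ≤ (Nat.factorial (2 * k) : ℝ) / (((n : ℝ) + 1) * (1 - q)) ^ (2 * k + 1) := by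
  set u : ℝ := 1 - q with hu
  have hu0 : 0 < u := by simp [hu]; linarith
  set c : ℝ := ((n : ℝ) + 1) * u with hc
  have hc0 : 0 < c := by positivity
  set r : ℝ := Real.exp (-c) with hr
  have hr0 : 0 < r := Real.exp_pos _
  have hr1 : r < 1 := Real.exp_lt_one_iff.mpr (by linarith)
  have h1r : 0 < 1 - r := by linarith
  set B : ℝ := (Nat.factorial (2 * k) : ℝ) / c ^ (2 * k) with hB
  have hB0 : 0 < B := by positivity
  -- termwise bound
  have hterm : ∀ m : ℕ, ((m : ℝ) + 1) ^ (2 * k) * q ^ (2 * (n + 1) * (m + 1))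
      ≤ (B * r) * r ^ m := by
    intro m
    set s : ℝ := c * ((m : ℝ) + 1) with hs
    have hs0 : 0 < s := by positivity
    have hqe : q ≤ Real.exp (-u) := by
      have := Real.add_one_le_exp (-u)
      linarith
    have hq_pow : q ^ (2 * (n + 1) * (m + 1)) ≤ Real.exp (-s) * Real.exp (-s) := by
      calc q ^ (2 * (n + 1) * (m + 1)) ≤ Real.exp (-u) ^ (2 * (n + 1) * (m + 1)) :=
            pow_le_pow_left₀ hq0.le hqe _
        _ = Real.exp (-s) * Real.exp (-s) := by
            rw [← Real.exp_nat_mul, ← Real.exp_add]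
            congr 1
            simp only [hs, hc]
            push_cast
            ring
    have hkey : ((m : ℝ) + 1) ^ (2 * k) * Real.exp (-s) ≤ B := by
      rw [hB, le_div_iff₀ (pow_pos hc0 _)]
      have h2 : s ^ (2 * k) ≤ (Nat.factorial (2 * k) : ℝ) * Real.exp s := by
        have h := Real.pow_div_factorial_le_exp (x := s) hs0.le (2 * k)
        rw [div_le_iff₀ (by positivity)] at h
        linarith
      have hsp : s ^ (2 * k) = c ^ (2 * k) * ((m : ℝ) + 1) ^ (2 * k) := by
        rw [hs, mul_pow]
      calc ((m : ℝ) + 1) ^ (2 * k) * Real.exp (-s) * c ^ (2 * k)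
          = s ^ (2 * k) * Real.exp (-s) := by rw [hsp]; ring
        _ ≤ (Nat.factorial (2 * k) : ℝ) * Real.exp s * Real.exp (-s) :=
            mul_le_mul_of_nonneg_right h2 (Real.exp_pos _).le
        _ = (Nat.factorial (2 * k) : ℝ) := by
            rw [mul_assoc, ← Real.exp_add]
            simp
    have hrs : Real.exp (-s) = r ^ (m + 1) := by
      rw [hr, ← Real.exp_nat_mul]
      congr 1
      simp only [hs]
      push_cast
      ring
    calc ((m : ℝ) + 1) ^ (2 * k) * q ^ (2 * (n + 1) * (m + 1))
        ≤ ((m : ℝ) + 1) ^ (2 * k) * (Real.exp (-s) * Real.exp (-s)) :=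
          mul_le_mul_of_nonneg_left hq_pow (by positivity)
      _ = (((m : ℝ) + 1) ^ (2 * k) * Real.exp (-s)) * Real.exp (-s) := by ring
      _ ≤ B * Real.exp (-s) := mul_le_mul_of_nonneg_right hkey (Real.exp_pos _).le
      _ = (B * r) * r ^ m := by rw [hrs, pow_succ]; ring
  -- summability of LHS
  have hqn : ‖q ^ (2 * (n + 1))‖ < 1 := by
    rw [Real.norm_eq_abs, abs_of_pos (pow_pos hq0 _)]
    exact pow_lt_one₀ hq0.le hq1 (by omega)
  have hsumL : Summable (fun m : ℕ => ((m : ℝ) + 1) ^ (2 * k) * q ^ (2 * (n + 1) * (m + 1))) := by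
    have h := (summable_nat_add_iff 1).mpr
      (summable_pow_mul_geometric_of_norm_lt_one (R := ℝ) (2 * k) hqn)
    refine h.congr fun m => ?_
    rw [← pow_mul]
    push_cast
    ring_nf
  have hsumR : Summable (fun m : ℕ => (B * r) * r ^ m) :=
    (summable_geometric_of_lt_one hr0.le hr1).mul_left _
  have hT : ∑' m : ℕ, ((m : ℝ) + 1) ^ (2 * k) * q ^ (2 * (n + 1) * (m + 1))
      ≤ (B * r) * (1 - r)⁻¹ := by
    calc ∑' m : ℕ, ((m : ℝ) + 1) ^ (2 * k) * q ^ (2 * (n + 1) * (m + 1))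
        ≤ ∑' m : ℕ, (B * r) * r ^ m := Summable.tsum_le_tsum hterm hsumL hsumR
      _ = (B * r) * ∑' m : ℕ, r ^ m := tsum_mul_left
      _ = (B * r) * (1 - r)⁻¹ := by rw [tsum_geometric_of_lt_one hr0.le hr1]
  refine hT.trans ?_
  -- (B*r)/(1-r) ≤ B/c  and  B/c = RHS
  have hrc : r * c ≤ 1 - r := by
    have h1 : (c + 1) * r ≤ 1 := by
      calc (c + 1) * r ≤ Real.exp c * r :=
            mul_le_mul_of_nonneg_right (by have := Real.add_one_le_exp c; linarith) hr0.le
        _ = 1 := by rw [hr, ← Real.exp_add]; simp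
    nlinarith
  have hfin : (B * r) * (1 - r)⁻¹ ≤ B / c := by
    rw [show (B * r) * (1 - r)⁻¹ = (B * r) / (1 - r) from by rw [div_eq_mul_inv],
      div_le_div_iff₀ h1r hc0]
    nlinarith [mul_le_mul_of_nonneg_left hrc hB0.le]
  refine hfin.trans (le_of_eq ?_)
  rw [hB, div_div, ← pow_succ]

/-- The nontrivial Dirichlet character modulo 4. -/
def chi4 (n : ℕ) : ℤ :=
  if n % 4 = 1 then 1 else if n % 4 = 3 then -1 else 0

lemma chi4_even_zero {n : ℕ} (hn : n % 2 = 1) : chi4 (n + 1) = 0 := by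
  unfold chi4
  rw [if_neg (by omega), if_neg (by omega)]

lemma chi4_two_mul_add_one (j : ℕ) : (chi4 (2 * j + 1) : ℝ) = (-1 : ℝ) ^ j := by
  rcases Nat.even_or_odd j with ⟨i, hi⟩ | ⟨i, hi⟩ <;> subst hi <;> unfold chi4
  · rw [if_pos (by omega), Even.neg_one_pow ⟨i, rfl⟩]
    simp
  · rw [if_neg (by omega), if_pos (by omega), Odd.neg_one_pow ⟨i, rfl⟩]
    simp

lemma chi4_abs_le (n : ℕ) : |(chi4 n : ℝ)| ≤ 1 := by
  unfold chi4
  split_ifs <;> simp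

lemma sum_eval (k : ℕ) :
    ∑' n : ℕ, (chi4 (n + 1) : ℝ) *
        ((Nat.factorial (2 * k) : ℝ) / ((2 * (n + 1) : ℕ) : ℝ) ^ (2 * k + 1))
      = (Nat.factorial (2 * k) : ℝ) *
        (∑' j : ℕ, (-1 : ℝ) ^ j / (2 * (j : ℝ) + 1) ^ (2 * k + 1)) / 2 ^ (2 * k + 1) := by
  set F : ℕ → ℝ := fun n => (chi4 (n + 1) : ℝ) *
    ((Nat.factorial (2 * k) : ℝ) / ((2 * (n + 1) : ℕ) : ℝ) ^ (2 * k + 1)) with hF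
  have hinj : Function.Injective (fun j : ℕ => 2 * j) := fun a b h => by dsimp only at h; omega
  have hsupp : Function.support F ⊆ Set.range (fun j : ℕ => 2 * j) := by
    intro n hn
    by_contra hcon
    have hodd : n % 2 = 1 := by
      rcases Nat.even_or_odd n with ⟨i, hi⟩ | ⟨i, hi⟩
      · exact absurd ⟨i, by dsimp only; omega⟩ hcon
      · omega
    apply hn
    simp only [hF, chi4_even_zero hodd]
    simp
  rw [← hinj.tsum_eq hsupp]
  have hterm : ∀ j : ℕ, F (2 * j) = (Nat.factorial (2 * k) : ℝ) *
      ((-1 : ℝ) ^ j / (2 * (j : ℝ) + 1) ^ (2 * k + 1)) / 2 ^ (2 * k + 1) := by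
    intro j
    simp only [hF]
    rw [chi4_two_mul_add_one j]
    rw [show ((2 * (2 * j + 1) : ℕ) : ℝ) = 2 * (2 * (j : ℝ) + 1) from by push_cast; ring,
      mul_pow]
    have h2 : ((2 : ℝ)) ^ (2 * k + 1) ≠ 0 := pow_ne_zero _ (by norm_num)
    have h3 : (2 * (j : ℝ) + 1) ^ (2 * k + 1) ≠ 0 := pow_ne_zero _ (by positivity)
    field_simp
  calc ∑' j : ℕ, F (2 * j)
      = ∑' j : ℕ, (Nat.factorial (2 * k) : ℝ) *
          ((-1 : ℝ) ^ j / (2 * (j : ℝ) + 1) ^ (2 * k + 1)) / 2 ^ (2 * k + 1) :=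
        tsum_congr hterm
    _ = (Nat.factorial (2 * k) : ℝ) *
          (∑' j : ℕ, (-1 : ℝ) ^ j / (2 * (j : ℝ) + 1) ^ (2 * k + 1)) / 2 ^ (2 * k + 1) := by
        rw [tsum_div_const, tsum_mul_left]

/-- For odd k ≥ 1, lim_{q→1⁻} (1-q)^{2k+1} ∑_{n≥1} χ₋₄(n) ∑_{m≥1} m^{2k} q^{2nm}
  = (2k)! β(2k+1)/2^{2k+1}. -/
theorem lambert_limit_odd (k : ℕ) (hk : 1 ≤ k) (hko : Odd k) :
    Tendsto
      (fun q : ℝ => (1 - q) ^ (2 * k + 1) *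
        ∑' n : ℕ, (chi4 (n + 1) : ℝ) *
          ∑' m : ℕ, ((m : ℝ) + 1) ^ (2 * k) * q ^ (2 * (n + 1) * (m + 1)))
      (nhdsWithin 1 (Set.Ioo 0 1))
      (nhds ((Nat.factorial (2 * k) : ℝ) *
        (∑' j : ℕ, (-1 : ℝ) ^ j / (2 * (j : ℝ) + 1) ^ (2 * k + 1)) / 2 ^ (2 * k + 1))) := by
  have hmain : Tendsto (fun q : ℝ => ∑' n : ℕ,
      (chi4 (n + 1) : ℝ) * ((1 - q) ^ (2 * k + 1) *
        ∑' m : ℕ, ((m : ℝ) + 1) ^ (2 * k) * q ^ (2 * (n + 1) * (m + 1))))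
      (nhdsWithin 1 (Set.Ioo 0 1))
      (nhds (∑' n : ℕ, (chi4 (n + 1) : ℝ) *
        ((Nat.factorial (2 * k) : ℝ) / ((2 * (n + 1) : ℕ) : ℝ) ^ (2 * k + 1)))) := by
    apply tendsto_tsum_of_dominated_convergence
      (bound := fun n : ℕ => (Nat.factorial (2 * k) : ℝ) / ((n : ℝ) + 1) ^ (2 * k + 1))
    · -- summable bound
      have h1 : Summable (fun n : ℕ => 1 / ((n : ℝ)) ^ (2 * k + 1)) :=
        Real.summable_one_div_nat_pow.mpr (by omega)
      have h2 := (summable_nat_add_iff 1).mpr h1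
      refine (h2.mul_left (Nat.factorial (2 * k) : ℝ)).congr fun n => ?_
      push_cast
      ring
    · -- pointwise limits
      intro n
      exact (pointwise_lim (2 * k) (2 * (n + 1)) (by omega) (by omega)).const_mul _
    · -- uniform bound
      filter_upwards [self_mem_nhdsWithin] with q hq n
      obtain ⟨hq0, hq1⟩ := hq
      have hT := inner_tsum_bound k n hq0 hq1
      have hTnn : 0 ≤ ∑' m : ℕ, ((m : ℝ) + 1) ^ (2 * k) * q ^ (2 * (n + 1) * (m + 1)) :=
        tsum_nonneg fun m => by positivity
      have hup : (0 : ℝ) ≤ (1 - q) ^ (2 * k + 1) :=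
        pow_nonneg (by linarith) _
      have h1q : ((1 : ℝ) - q) ^ (2 * k + 1) ≠ 0 :=
        pow_ne_zero _ (ne_of_gt (by linarith : (0 : ℝ) < 1 - q))
      rw [norm_mul, Real.norm_eq_abs, Real.norm_eq_abs,
        abs_of_nonneg (mul_nonneg hup hTnn)]
      calc |(chi4 (n + 1) : ℝ)| * ((1 - q) ^ (2 * k + 1) *
            ∑' m : ℕ, ((m : ℝ) + 1) ^ (2 * k) * q ^ (2 * (n + 1) * (m + 1)))
          ≤ 1 * ((1 - q) ^ (2 * k + 1) *
            ∑' m : ℕ, ((m : ℝ) + 1) ^ (2 * k) * q ^ (2 * (n + 1) * (m + 1))) :=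
            mul_le_mul_of_nonneg_right (chi4_abs_le _) (mul_nonneg hup hTnn)
        _ = (1 - q) ^ (2 * k + 1) *
            ∑' m : ℕ, ((m : ℝ) + 1) ^ (2 * k) * q ^ (2 * (n + 1) * (m + 1)) := one_mul _
        _ ≤ (1 - q) ^ (2 * k + 1) *
            ((Nat.factorial (2 * k) : ℝ) / (((n : ℝ) + 1) * (1 - q)) ^ (2 * k + 1)) :=
            mul_le_mul_of_nonneg_left hT hup
        _ = (Nat.factorial (2 * k) : ℝ) / ((n : ℝ) + 1) ^ (2 * k + 1) := by
            rw [mul_pow]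
            have hn1 : (((n : ℝ)) + 1) ^ (2 * k + 1) ≠ 0 := by positivity
            field_simp
  rw [sum_eval k] at hmain
  refine hmain.congr fun q => ?_
  calc ∑' n : ℕ, (chi4 (n + 1) : ℝ) * ((1 - q) ^ (2 * k + 1) *
        ∑' m : ℕ, ((m : ℝ) + 1) ^ (2 * k) * q ^ (2 * (n + 1) * (m + 1)))
      = ∑' n : ℕ, (1 - q) ^ (2 * k + 1) * ((chi4 (n + 1) : ℝ) *
        ∑' m : ℕ, ((m : ℝ) + 1) ^ (2 * k) * q ^ (2 * (n + 1) * (m + 1))) :=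
        tsum_congr fun n => by ring
    _ = (1 - q) ^ (2 * k + 1) * ∑' n : ℕ, (chi4 (n + 1) : ℝ) *
        ∑' m : ℕ, ((m : ℝ) + 1) ^ (2 * k) * q ^ (2 * (n + 1) * (m + 1)) := tsum_mul_left
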